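/- arXiv:2302.01530 — 2 statements merged into one kernel-verified Lean document; each statement's English description precedes it below -/
import Mathlib

section
/- Let I be a finite index set, points x_i ∈ ℝᵐ (i ∈ I), and λ a Beta(α, α) random variable with α > 0. Suppose ℓ(u) = uᵀ A u + bᵀ u + c is a quadratic function with A symmetric. Then E_λ[(1/|I|²) Σ_{i,j∈I} ℓ(λ x_i + (1−λ) x_j)] = (1/|I|) Σ_{j∈I} ℓ(x_j) + (1/|I|²) Σ_{i,j∈I} [ (1/2)(∇ℓ(x_j))ᵀ (x_i − x_j) + (1/2)·((α+1)/(2α+1))·(x_i − x_j)ᵀ A (x_i − x_j) ]. -/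
open MeasureTheory Set Matrix Finset

lemma mixaux_ae {a b : ℝ} :
    ∀ t ∈ Ioo (0:ℝ) 1,
      ((t:ℂ) ^ ((a:ℂ)-1) * (1-(t:ℂ)) ^ ((b:ℂ)-1)) = ((t ^ (a-1) * (1-t) ^ (b-1) : ℝ) : ℂ) := by
  intro t ht
  have h1 : ((t:ℝ) ^ (a-1) : ℝ) = ((t:ℂ) ^ ((a:ℂ)-1) : ℂ) := by
    rw [Complex.ofReal_cpow ht.1.le]; push_cast; ring_nf
  have h2 : (((1-t:ℝ)) ^ (b-1) : ℝ) = ((1-(t:ℂ)) ^ ((b:ℂ)-1) : ℂ) := by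
    rw [Complex.ofReal_cpow (by linarith [ht.2] : (0:ℝ) ≤ 1 - t)]; push_cast; ring_nf
  rw [← h1, ← h2]
  norm_cast

lemma mixaux_betaOfReal {a b : ℝ} (ha : 0 < a) (hb : 0 < b) :
    Complex.betaIntegral a b = ((∫ t in Ioo (0:ℝ) 1, t ^ (a-1) * (1-t) ^ (b-1)) : ℝ) := by
  rw [Complex.betaIntegral, intervalIntegral.integral_of_le zero_le_one,
    integral_Ioc_eq_integral_Ioo]
  calc (∫ t in Ioo (0:ℝ) 1, (t:ℂ) ^ ((a:ℂ)-1) * (1-(t:ℂ)) ^ ((b:ℂ)-1))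
      = ∫ t in Ioo (0:ℝ) 1, ((t ^ (a-1) * (1-t) ^ (b-1) : ℝ) : ℂ) :=
        setIntegral_congr_fun measurableSet_Ioo fun t ht => mixaux_ae t ht
    _ = ((∫ t in Ioo (0:ℝ) 1, t ^ (a-1) * (1-t) ^ (b-1)) : ℝ) := integral_ofReal

lemma mixaux_betaVal {a b : ℝ} (ha : 0 < a) (hb : 0 < b) :
    ∫ t in Ioo (0:ℝ) 1, t ^ (a-1) * (1-t) ^ (b-1)
      = Real.Gamma a * Real.Gamma b / Real.Gamma (a+b) := by
  have h := Complex.Gamma_mul_Gamma_eq_betaIntegral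
    (s := (a:ℂ)) (t := (b:ℂ)) (by simpa using ha) (by simpa using hb)
  rw [mixaux_betaOfReal ha hb] at h
  have hab : ((a:ℂ) + b) = ((a+b : ℝ) : ℂ) := by push_cast; ring
  rw [hab, Complex.Gamma_ofReal, Complex.Gamma_ofReal, Complex.Gamma_ofReal] at h
  have h' : Real.Gamma a * Real.Gamma b
      = Real.Gamma (a+b) * ∫ t in Ioo (0:ℝ) 1, t ^ (a-1) * (1-t) ^ (b-1) := by
    exact_mod_cast h
  have hpos : Real.Gamma (a+b) ≠ 0 := (Real.Gamma_pos_of_pos (by linarith)).ne'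
  field_simp [hpos] at h' ⊢
  linarith [h']

lemma mixaux_betaInt {a b : ℝ} (ha : 0 < a) (hb : 0 < b) :
    IntegrableOn (fun t : ℝ => t ^ (a-1) * (1-t) ^ (b-1)) (Ioo (0:ℝ) 1) := by
  have h := (Complex.betaIntegral_convergent (u := (a:ℂ)) (v := (b:ℂ))
    (by simpa using ha) (by simpa using hb)).1
  have h2 : IntegrableOn (fun t : ℝ => (t:ℂ) ^ ((a:ℂ)-1) * (1-(t:ℂ)) ^ ((b:ℂ)-1))
      (Ioo (0:ℝ) 1) := by
    simpa using h.mono_set Ioo_subset_Ioc_self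
  have h3 := h2.re
  refine h3.congr ?_
  filter_upwards [ae_restrict_mem measurableSet_Ioo] with t ht
  rw [mixaux_ae t ht]
  simp

open Matrix Finset in
lemma mixaux_quad {m : ℕ} (A : Matrix (Fin m) (Fin m) ℝ) (hA : A.IsSymm)
    (b : Fin m → ℝ) (c : ℝ) (u d : Fin m → ℝ) (t : ℝ) :
    (u + t • d) ⬝ᵥ A *ᵥ (u + t • d) + b ⬝ᵥ (u + t • d) + c
      = (u ⬝ᵥ A *ᵥ u + b ⬝ᵥ u + c) + t * (((2:ℝ) • (A *ᵥ u) + b) ⬝ᵥ d)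
        + t^2 * (d ⬝ᵥ A *ᵥ d) := by
  have hsym : u ⬝ᵥ A *ᵥ d = d ⬝ᵥ A *ᵥ u := by
    rw [Matrix.dotProduct_mulVec, ← Matrix.mulVec_transpose, hA.eq, dotProduct_comm]
  simp only [Matrix.mulVec_add, Matrix.mulVec_smul, dotProduct_add, add_dotProduct,
    dotProduct_smul, smul_dotProduct, smul_eq_mul, Pi.smul_apply]
  rw [hsym, dotProduct_comm (A *ᵥ u) d]
  ring

/-- Exact quadratic MixUp loss decomposition: for ℓ(u) = uᵀAu + bᵀu + c with A symmetric
and λ ~ Beta(α, α) (α > 0), the expected MixUp loss over all pairs equals the standard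
loss plus first- and second-order correction terms with E[λ] = 1/2 and
E[λ²] = (α+1)/(4α+2). Here ∇ℓ(u) = 2Au + b. -/
theorem quadratic_mixup_decomposition {m : ℕ} {ι : Type*} [Fintype ι]
    (α : ℝ) (hα : 0 < α) (A : Matrix (Fin m) (Fin m) ℝ) (hA : A.IsSymm)
    (b : Fin m → ℝ) (c : ℝ) (x : ι → (Fin m → ℝ)) :
    let ℓ : (Fin m → ℝ) → ℝ := fun u => u ⬝ᵥ A *ᵥ u + b ⬝ᵥ u + c
    let N : ℝ := (Fintype.card ι : ℝ)
    (∫ t in Ioo (0:ℝ) 1,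
        ((1 / N ^ 2) * ∑ i : ι, ∑ j : ι, ℓ (t • x i + (1 - t) • x j)) *
          (t ^ (α - 1) * (1 - t) ^ (α - 1))) /
      (∫ t in Ioo (0:ℝ) 1, t ^ (α - 1) * (1 - t) ^ (α - 1)) =
    (1 / N) * ∑ j : ι, ℓ (x j) +
      (1 / N ^ 2) * ∑ i : ι, ∑ j : ι,
        ((1 / 2) * (((2:ℝ) • (A *ᵥ x j) + b) ⬝ᵥ (x i - x j)) +
          (1 / 2) * ((α + 1) / (2 * α + 1)) *
            ((x i - x j) ⬝ᵥ A *ᵥ (x i - x j))) := by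
  intro ℓ N
  rcases isEmpty_or_nonempty ι with hι | hι
  · simp [N, Fintype.card_eq_zero, univ_eq_empty]
  have hN : (0:ℝ) < N := by
    have := Fintype.card_pos (α := ι)
    show (0:ℝ) < (Fintype.card ι : ℝ)
    exact_mod_cast this
  -- pointwise expansion of the loss
  have hmix : ∀ (t : ℝ) (i j : ι), ℓ (t • x i + (1 - t) • x j)
      = ℓ (x j) + t * (((2:ℝ) • (A *ᵥ x j) + b) ⬝ᵥ (x i - x j))
        + t^2 * ((x i - x j) ⬝ᵥ A *ᵥ (x i - x j)) := by
    intro t i j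
    have harg : t • x i + (1 - t) • x j = x j + t • (x i - x j) := by
      ext k; simp [Pi.smul_apply, Pi.sub_apply]; ring
    rw [harg]
    exact mixaux_quad A hA b c (x j) (x i - x j) t
  set T0 : ℝ := ∑ i : ι, ∑ j : ι, ℓ (x j) with hT0
  set T1 : ℝ := ∑ i : ι, ∑ j : ι, (((2:ℝ) • (A *ᵥ x j) + b) ⬝ᵥ (x i - x j)) with hT1
  set T2 : ℝ := ∑ i : ι, ∑ j : ι, ((x i - x j) ⬝ᵥ A *ᵥ (x i - x j)) with hT2
  have hexp : ∀ t : ℝ,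
      ((1 / N ^ 2) * ∑ i : ι, ∑ j : ι, ℓ (t • x i + (1 - t) • x j)) *
          (t ^ (α - 1) * (1 - t) ^ (α - 1))
        = (T0 / N ^ 2) * (t ^ (α - 1) * (1 - t) ^ (α - 1))
          + (T1 / N ^ 2) * (t * (t ^ (α - 1) * (1 - t) ^ (α - 1)))
          + (T2 / N ^ 2) * (t ^ 2 * (t ^ (α - 1) * (1 - t) ^ (α - 1))) := by
    intro t
    have : ∑ i : ι, ∑ j : ι, ℓ (t • x i + (1 - t) • x j) = T0 + t * T1 + t^2 * T2 := by
      simp only [hmix, Finset.sum_add_distrib, ← Finset.mul_sum, hT0, hT1, hT2]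
    rw [this]; ring
  simp only [hexp]
  -- integrability facts
  have hw0 : IntegrableOn (fun t : ℝ => t ^ (α - 1) * (1 - t) ^ (α - 1)) (Ioo (0:ℝ) 1) :=
    mixaux_betaInt hα hα
  have hw1 : IntegrableOn (fun t : ℝ => t * (t ^ (α - 1) * (1 - t) ^ (α - 1))) (Ioo (0:ℝ) 1) := by
    refine (mixaux_betaInt (a := α + 1) (b := α) (by linarith) hα).congr ?_
    filter_upwards [ae_restrict_mem measurableSet_Ioo] with t ht
    rw [show α + 1 - 1 = (α - 1) + 1 by ring, Real.rpow_add_one ht.1.ne']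
    ring
  have hw2 : IntegrableOn (fun t : ℝ => t ^ 2 * (t ^ (α - 1) * (1 - t) ^ (α - 1)))
      (Ioo (0:ℝ) 1) := by
    refine (mixaux_betaInt (a := α + 2) (b := α) (by linarith) hα).congr ?_
    filter_upwards [ae_restrict_mem measurableSet_Ioo] with t ht
    rw [show α + 2 - 1 = (α - 1) + 1 + 1 by ring, Real.rpow_add_one ht.1.ne',
      Real.rpow_add_one ht.1.ne']
    ring
  -- values of the moment integrals
  have hv0 : (∫ t in Ioo (0:ℝ) 1, t ^ (α - 1) * (1 - t) ^ (α - 1))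
      = Real.Gamma α * Real.Gamma α / Real.Gamma (α + α) := mixaux_betaVal hα hα
  have hv1 : (∫ t in Ioo (0:ℝ) 1, t * (t ^ (α - 1) * (1 - t) ^ (α - 1)))
      = Real.Gamma (α + 1) * Real.Gamma α / Real.Gamma (α + 1 + α) := by
    rw [← mixaux_betaVal (a := α + 1) (b := α) (by linarith) hα]
    refine setIntegral_congr_fun measurableSet_Ioo fun t ht => ?_
    rw [show α + 1 - 1 = (α - 1) + 1 by ring, Real.rpow_add_one ht.1.ne']
    ring
  have hv2 : (∫ t in Ioo (0:ℝ) 1, t ^ 2 * (t ^ (α - 1) * (1 - t) ^ (α - 1)))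
      = Real.Gamma (α + 2) * Real.Gamma α / Real.Gamma (α + 2 + α) := by
    rw [← mixaux_betaVal (a := α + 2) (b := α) (by linarith) hα]
    refine setIntegral_congr_fun measurableSet_Ioo fun t ht => ?_
    rw [show α + 2 - 1 = (α - 1) + 1 + 1 by ring, Real.rpow_add_one ht.1.ne',
      Real.rpow_add_one ht.1.ne']
    ring
  have hA12 : IntegrableOn (fun t : ℝ =>
      T0 / N ^ 2 * (t ^ (α - 1) * (1 - t) ^ (α - 1))
        + T1 / N ^ 2 * (t * (t ^ (α - 1) * (1 - t) ^ (α - 1)))) (Ioo (0:ℝ) 1) :=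
    (hw0.const_mul _).add (hw1.const_mul _)
  rw [integral_add hA12 (hw2.const_mul _),
    integral_add (hw0.const_mul _) (hw1.const_mul _),
    integral_const_mul, integral_const_mul, integral_const_mul, hv0, hv1, hv2]
  -- Gamma recurrences
  have hGa : (0:ℝ) < Real.Gamma α := Real.Gamma_pos_of_pos hα
  have hG2 : (0:ℝ) < Real.Gamma (α + α) := Real.Gamma_pos_of_pos (by linarith)
  have h1 : Real.Gamma (α + 1) = α * Real.Gamma α := Real.Gamma_add_one hα.ne'
  have h2 : Real.Gamma (α + 2) = (α + 1) * (α * Real.Gamma α) := by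
    rw [show α + 2 = (α + 1) + 1 by ring, Real.Gamma_add_one (by linarith), h1]
  have h3 : Real.Gamma (α + 1 + α) = (α + α) * Real.Gamma (α + α) := by
    rw [show α + 1 + α = (α + α) + 1 by ring, Real.Gamma_add_one (by linarith)]
  have h4 : Real.Gamma (α + 2 + α) = (α + α + 1) * ((α + α) * Real.Gamma (α + α)) := by
    rw [show α + 2 + α = (α + α + 1) + 1 by ring, Real.Gamma_add_one (by linarith),
      show α + α + 1 = α + 1 + α by ring, h3]
  rw [h1, h2, h3, h4]
  -- rewrite the RHS sums
  have hR0 : (1 / N) * ∑ j : ι, ℓ (x j) = T0 / N ^ 2 := by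
    rw [hT0, Finset.sum_const, card_univ, nsmul_eq_mul]
    field_simp [N]
    ring
  have hR1 : ∑ i : ι, ∑ j : ι,
      ((1 / 2) * (((2:ℝ) • (A *ᵥ x j) + b) ⬝ᵥ (x i - x j)) +
        (1 / 2) * ((α + 1) / (2 * α + 1)) * ((x i - x j) ⬝ᵥ A *ᵥ (x i - x j)))
      = (1 / 2) * T1 + (1 / 2) * ((α + 1) / (2 * α + 1)) * T2 := by
    simp only [Finset.sum_add_distrib, ← Finset.mul_sum, hT1, hT2]
  rw [hR1, hR0]
  have hα2 : (2 * α + 1) ≠ 0 := by positivity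
  field_simp
  ring
end

section
/- For λ ~ Beta(α, α) with α > 0 and any integer n ≥ 1, the central moment satisfies E[(λ − 1/2)^{2n}] ≤ (1/4)ⁿ · 1/(2α+1)ⁿ · (2n)!/(2ⁿ n!) · ∏_{k=1}^{n-1} (2α + 2k)/(2α + 2k + 1) ≤ (2n−1)!! / (4(2α+1))ⁿ; in particular E[(λ − 1/2)²] = 1/(4(2α+1)), which tends to 0 as α → ∞. -/
/-!
Integrating by parts against `t ^ α (1 - t) ^ α`, which vanishes at both ends, and using
`t (1 - t) = 1/4 - (t - 1/2)²` gives the recurrence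
`(2α + m + 1) E[(λ - 1/2)^(m+2)] = (m + 1)/4 · E[(λ - 1/2)^m]`, hence the exact value
`E[(λ - 1/2)^(2n)] = (2n - 1)!! / (4ⁿ ∏_{k<n} (2α + 2k + 1))`.
The first bound follows factor by factor from `2α + 1 ≤ 2α + 2k` for `k ≥ 1`, the second from
`(2α + 2k)/(2α + 2k + 1) ≤ 1`.
-/

open MeasureTheory Set Filter Finset

open intervalIntegral

open scoped Nat

lemma intervalIntegrable_rpow_mul_one_sub_rpow_zero_half {a : ℝ} (ha : 0 < a) (b : ℝ) :
    IntervalIntegrable (fun t : ℝ => t ^ (a - 1) * (1 - t) ^ (b - 1)) volume 0 (1 / 2) := by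
  refine (intervalIntegrable_rpow' (by linarith)).mul_continuousOn ?_
  refine ContinuousOn.rpow_const (f := fun t : ℝ => 1 - t) (by fun_prop) fun t ht => Or.inl ?_
  rw [Set.uIcc_of_le (by norm_num)] at ht
  linarith [ht.2]

lemma intervalIntegrable_rpow_mul_one_sub_rpow {a b : ℝ} (ha : 0 < a) (hb : 0 < b) :
    IntervalIntegrable (fun t : ℝ => t ^ (a - 1) * (1 - t) ^ (b - 1)) volume 0 1 := by
  have hright := (intervalIntegrable_rpow_mul_one_sub_rpow_zero_half hb a).comp_sub_left 1
  norm_num at hright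
  refine (intervalIntegrable_rpow_mul_one_sub_rpow_zero_half ha b).trans ?_
  simpa [mul_comm] using hright.symm

lemma hasDerivAt_rpow_mul_one_sub_rpow {α x : ℝ} (hx : x ∈ Ioo (0 : ℝ) 1) :
    HasDerivAt (fun t : ℝ => t ^ α * (1 - t) ^ α)
      (α * (1 - 2 * x) * (x ^ (α - 1) * (1 - x) ^ (α - 1))) x := by
  have hx0 : x ≠ 0 := hx.1.ne'
  have hx1 : 1 - x ≠ 0 := by linarith [hx.2]
  have hleft := Real.hasDerivAt_rpow_const (p := α) (Or.inl hx0)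
  have hright := ((hasDerivAt_id' x).const_sub 1).rpow_const (p := α) (Or.inl hx1)
  refine (hleft.mul hright).congr_deriv ?_
  rw [Real.rpow_sub_one hx0, Real.rpow_sub_one hx1]
  field_simp
  ring

/-- `B(α, α) · E[(λ - 1/2)^m]` for `λ ~ Beta(α, α)`. -/
noncomputable def centralBetaIntegral (α : ℝ) (m : ℕ) : ℝ :=
  ∫ t in (0 : ℝ)..1, (t - 1 / 2) ^ m * (t ^ (α - 1) * (1 - t) ^ (α - 1))

lemma setIntegral_Ioo_eq_centralBetaIntegral (α : ℝ) (m : ℕ) :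
    ∫ t in Ioo (0 : ℝ) 1, (t - 1 / 2) ^ m * (t ^ (α - 1) * (1 - t) ^ (α - 1)) =
      centralBetaIntegral α m := by
  rw [centralBetaIntegral, integral_of_le zero_le_one, integral_Ioc_eq_integral_Ioo]

section CentralBetaIntegral

variable {α : ℝ}

lemma intervalIntegrable_centralBetaIntegrand (hα : 0 < α) (m : ℕ) :
    IntervalIntegrable (fun t : ℝ => (t - 1 / 2) ^ m * (t ^ (α - 1) * (1 - t) ^ (α - 1)))
      volume 0 1 :=
  (intervalIntegrable_rpow_mul_one_sub_rpow hα hα).continuousOn_mul (by fun_prop)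

lemma centralBetaIntegral_zero_pos (hα : 0 < α) : 0 < centralBetaIntegral α 0 := by
  refine intervalIntegral_pos_of_pos_on (intervalIntegrable_centralBetaIntegrand hα 0)
    (fun x hx => ?_) one_pos
  rw [pow_zero, one_mul]
  exact mul_pos (Real.rpow_pos_of_pos hx.1 _) (Real.rpow_pos_of_pos (by linarith [hx.2]) _)

lemma centralBetaIntegral_add_two (hα : 0 < α) (m : ℕ) :
    (2 * α + m + 1) * centralBetaIntegral α (m + 2) = (m + 1) / 4 * centralBetaIntegral α m := by
  set w : ℝ → ℝ := fun t => t ^ (α - 1) * (1 - t) ^ (α - 1)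
  have hderiv : ∀ x ∈ Ioo (0 : ℝ) 1,
      HasDerivAt (fun t : ℝ => (t - 1 / 2) ^ (m + 1) * (t ^ α * (1 - t) ^ α))
        ((m + 1) / 4 * ((x - 1 / 2) ^ m * w x) - (2 * α + m + 1) * ((x - 1 / 2) ^ (m + 2) * w x))
        x := by
    intro x hx
    have hpow := ((hasDerivAt_id' x).sub_const (1 / 2 : ℝ)).pow (m + 1)
    have hxw : x ^ α * (1 - x) ^ α = (1 / 4 - (x - 1 / 2) ^ 2) * w x := by
      have hx0 : x ^ α = x ^ (α - 1) * x := by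
        rw [← Real.rpow_add_one hx.1.ne', sub_add_cancel]
      have hx1 : (1 - x) ^ α = (1 - x) ^ (α - 1) * (1 - x) := by
        rw [← Real.rpow_add_one (by linarith [hx.2]), sub_add_cancel]
      rw [hx0, hx1]
      ring
    refine (hpow.mul (hasDerivAt_rpow_mul_one_sub_rpow hx)).congr_deriv ?_
    simp only [Pi.pow_apply, Nat.add_sub_cancel, hxw]
    push_cast
    ring
  have hcont : Continuous fun t : ℝ => (t - 1 / 2) ^ (m + 1) * (t ^ α * (1 - t) ^ α) := by
    have := Real.continuous_rpow_const hα.le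
    fun_prop
  have hint_m := (intervalIntegrable_centralBetaIntegrand hα m).const_mul ((m + 1) / 4 : ℝ)
  have hint_m2 := (intervalIntegrable_centralBetaIntegrand hα (m + 2)).const_mul
    (2 * α + m + 1 : ℝ)
  have hftc := integral_eq_sub_of_hasDerivAt_of_le zero_le_one hcont.continuousOn hderiv
    (hint_m.sub hint_m2)
  rw [integral_sub hint_m hint_m2, intervalIntegral.integral_const_mul,
    intervalIntegral.integral_const_mul] at hftc
  norm_num [Real.zero_rpow hα.ne'] at hftc
  unfold centralBetaIntegral
  linarith

lemma centralBetaIntegral_two_mul (hα : 0 < α) (n : ℕ) :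
    centralBetaIntegral α (2 * n) =
      (2 * n - 1)‼ / (4 ^ n * ∏ k ∈ range n, (2 * α + 2 * k + 1)) * centralBetaIntegral α 0 := by
  induction n with
  | zero => simp
  | succ n ih =>
    have hrec := centralBetaIntegral_add_two hα (2 * n)
    rw [show 2 * (n + 1) - 1 = 2 * n + 1 by omega, Nat.doubleFactorial_add_one,
      show 2 * (n + 1) = 2 * n + 2 by ring, prod_range_succ, pow_succ]
    push_cast at hrec ⊢
    rw [ih] at hrec
    field_simp at hrec ⊢
    linear_combination hrec

lemma beta_centralMoment_two_mul (hα : 0 < α) (n : ℕ) :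
    (∫ t in Ioo (0 : ℝ) 1, (t - 1 / 2) ^ (2 * n) * (t ^ (α - 1) * (1 - t) ^ (α - 1))) /
        (∫ t in Ioo (0 : ℝ) 1, t ^ (α - 1) * (1 - t) ^ (α - 1)) =
      (2 * n - 1)‼ / (4 ^ n * ∏ k ∈ range n, (2 * α + 2 * k + 1)) := by
  have hweight := setIntegral_Ioo_eq_centralBetaIntegral α 0
  simp only [pow_zero, one_mul] at hweight
  rw [setIntegral_Ioo_eq_centralBetaIntegral, hweight, centralBetaIntegral_two_mul hα,
    mul_div_cancel_right₀ _ (centralBetaIntegral_zero_pos hα).ne']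

lemma one_div_prod_le_one_div_pow_mul_prod (hα : 0 < 2 * α + 1) {n : ℕ} (hn : 1 ≤ n) :
    1 / ∏ k ∈ range n, (2 * α + 2 * k + 1) ≤
      (1 / (2 * α + 1)) ^ n * ∏ k ∈ Ico 1 n, (2 * α + 2 * k) / (2 * α + 2 * k + 1) := by
  induction n, hn using Nat.le_induction with
  | base => simp
  | succ n hn ih =>
    have hn' : (1 : ℝ) ≤ n := by exact_mod_cast hn
    have hstep : 1 / (2 * α + 2 * n + 1) ≤
        1 / (2 * α + 1) * ((2 * α + 2 * n) / (2 * α + 2 * n + 1)) := by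
      rw [div_mul_div_comm, div_le_div_iff₀ (by linarith) (by nlinarith)]
      nlinarith
    have hprod_nonneg : 0 ≤ 1 / ∏ k ∈ range n, (2 * α + 2 * k + 1) :=
      one_div_nonneg.2 (prod_nonneg fun k _ => by linarith [k.cast_nonneg (α := ℝ)])
    rw [prod_range_succ, prod_Ico_succ_top hn, ← one_div_mul_one_div]
    calc _ ≤ ((1 / (2 * α + 1)) ^ n * ∏ k ∈ Ico 1 n, (2 * α + 2 * k) / (2 * α + 2 * k + 1)) *
          (1 / (2 * α + 1) * ((2 * α + 2 * n) / (2 * α + 2 * n + 1))) :=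
          mul_le_mul ih hstep (one_div_nonneg.2 (by linarith)) (hprod_nonneg.trans ih)
      _ = _ := by ring

end CentralBetaIntegral

lemma Nat.factorial_two_mul_div_eq_doubleFactorial {n : ℕ} (hn : 1 ≤ n) :
    ((2 * n)! / (2 ^ n * n !) : ℝ) = (2 * n - 1)‼ := by
  obtain ⟨m, rfl⟩ := Nat.exists_eq_add_of_le' hn
  rw [show 2 * (m + 1) - 1 = 2 * m + 1 by omega, show 2 * (m + 1) = (2 * m + 1) + 1 by ring,
    Nat.factorial_eq_mul_doubleFactorial, show 2 * m + 1 + 1 = 2 * (m + 1) by ring,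
    Nat.doubleFactorial_two_mul]
  push_cast
  field_simp

/-- For λ ~ Beta(α, α) with α > 0 and n ≥ 1, the central moment E[(λ-1/2)^{2n}] is
bounded by (1/4)ⁿ (1/(2α+1))ⁿ (2n)!/(2ⁿ n!) ∏_{k=1}^{n-1} (2α+2k)/(2α+2k+1), which is
itself at most (2n-1)!!/(4(2α+1))ⁿ; in particular E[(λ-1/2)²] = 1/(4(2α+1)), which
tends to 0 as α → ∞. -/
theorem beta_central_moment_bound (n : ℕ) (hn : 1 ≤ n) :
    (∀ α : ℝ, 0 < α →
      (∫ t in Ioo (0:ℝ) 1, (t - 1/2) ^ (2 * n) * (t ^ (α - 1) * (1 - t) ^ (α - 1))) /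
        (∫ t in Ioo (0:ℝ) 1, t ^ (α - 1) * (1 - t) ^ (α - 1)) ≤
        (1/4 : ℝ) ^ n * (1 / (2 * α + 1)) ^ n * ((Nat.factorial (2 * n) : ℝ) / (2 ^ n * (Nat.factorial n : ℝ))) *
          ∏ k ∈ Finset.Ico 1 n, (2 * α + 2 * k) / (2 * α + 2 * k + 1)) ∧
    (∀ α : ℝ, 0 < α →
      (1/4 : ℝ) ^ n * (1 / (2 * α + 1)) ^ n * ((Nat.factorial (2 * n) : ℝ) / (2 ^ n * (Nat.factorial n : ℝ))) *
          ∏ k ∈ Finset.Ico 1 n, (2 * α + 2 * k) / (2 * α + 2 * k + 1) ≤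
        (Nat.doubleFactorial (2 * n - 1) : ℝ) / (4 * (2 * α + 1)) ^ n) ∧
    (∀ α : ℝ, 0 < α →
      (∫ t in Ioo (0:ℝ) 1, (t - 1/2) ^ 2 * (t ^ (α - 1) * (1 - t) ^ (α - 1))) /
        (∫ t in Ioo (0:ℝ) 1, t ^ (α - 1) * (1 - t) ^ (α - 1)) = 1 / (4 * (2 * α + 1))) ∧
    Tendsto (fun α : ℝ => 1 / (4 * (2 * α + 1))) atTop (nhds 0) := by
  refine ⟨fun α hα => ?_, fun α hα => ?_, fun α hα => ?_, ?_⟩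
  · rw [beta_centralMoment_two_mul hα, Nat.factorial_two_mul_div_eq_doubleFactorial hn]
    calc ((2 * n - 1)‼ : ℝ) / (4 ^ n * ∏ k ∈ range n, (2 * α + 2 * k + 1))
        = (1 / 4) ^ n * (2 * n - 1)‼ * (1 / ∏ k ∈ range n, (2 * α + 2 * k + 1)) := by
          rw [one_div_pow]; ring
      _ ≤ (1 / 4) ^ n * (2 * n - 1)‼ *
          ((1 / (2 * α + 1)) ^ n * ∏ k ∈ Ico 1 n, (2 * α + 2 * k) / (2 * α + 2 * k + 1)) := by
        gcongr
        exact one_div_prod_le_one_div_pow_mul_prod (by linarith) hn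
      _ = _ := by ring
  · rw [Nat.factorial_two_mul_div_eq_doubleFactorial hn]
    have hprod : ∏ k ∈ Ico 1 n, (2 * α + 2 * k) / (2 * α + 2 * k + 1) ≤ 1 :=
      prod_le_one (fun k _ => by positivity) fun k _ =>
        (div_le_one (by positivity)).2 (by linarith)
    calc _ ≤ (1 / 4 : ℝ) ^ n * (1 / (2 * α + 1)) ^ n * (2 * n - 1)‼ * 1 := by gcongr
      _ = _ := by rw [mul_one, ← mul_pow, div_mul_div_comm, one_mul, div_pow, one_pow]; ring
  · simpa using beta_centralMoment_two_mul hα 1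
  · exact tendsto_const_nhds.div_atTop <| tendsto_atTop_add_const_right _ _
      (tendsto_id.const_mul_atTop two_pos) |>.const_mul_atTop four_pos
end
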